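/- Let R ∈ {0,1}^{m×n} be a binary user–item interaction matrix such that every user u has degree d_u = Σ_i r_{u,i} > 0 and every item i appearing in some row has degree d_i = Σ_u r_{u,i} > 0. For each user u, define two probability vectors over items: the BPR prediction p̂_u with p̂_{u,i} = r_{u,i}/d_u (uniform on the interacted set N(u)), and the LightGCN prediction p̂'_u with p̂'_{u,i} = r_{u,i} / (√(d_i) · Σ_j r_{u,j}/√(d_j)). Then the total Shannon entropy of the LightGCN predictions never exceeds that of the BPR predictions: Σ_u Σ_i (−p̂'_{u,i} log p̂'_{u,i}) ≤ Σ_u Σ_i (−p̂_{u,i} log p̂_{u,i}), i.e., ΔS(R̂_L | R̂_B) = S(R̂_L) − S(R̂_B) ≤ 0 (with the convention 0 · log 0 = 0). -/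

import Mathlib

open Finset

/-- Pointwise Gibbs-type bound: for `q, d > 0`, `-q log q ≤ q log d + (1/d - q)`. -/
lemma negMulLog_le_aux {q d : ℝ} (hq : 0 < q) (hd : 0 < d) :
    Real.negMulLog q ≤ q * Real.log d + (1 / d - q) := by
  have hx : 0 < 1 / (q * d) := by positivity
  have h := Real.log_le_sub_one_of_pos hx
  have hlog : Real.log (1 / (q * d)) = -(Real.log q + Real.log d) := by
    rw [one_div, Real.log_inv, Real.log_mul hq.ne' hd.ne']
  have h2 : q * (1 / (q * d) - 1) = 1 / d - q := by
    field_simp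
  have h3 : q * Real.log (1 / (q * d)) ≤ 1 / d - q := by
    rw [← h2]
    exact mul_le_mul_of_nonneg_left h hq.le
  rw [hlog] at h3
  have : Real.negMulLog q = q * (-(Real.log q + Real.log d)) + q * Real.log d := by
    rw [Real.negMulLog]; ring
  linarith [this, add_le_add_right h3 (q * Real.log d)]

/-- For a binary interaction matrix `R` with all user degrees positive and all
item degrees of interacted items positive, the total Shannon entropy of the
LightGCN row-normalized predictions `p'` (weighting item `i` by `1/√dᵢ`) never
exceeds that of the BPR predictions `p` (uniform over the interacted set), i.e.
`ΔS(R̂_L | R̂_B) ≤ 0` (with the convention `0 · log 0 = 0`). -/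
theorem lightgcn_entropy_le_bpr_entropy
    (m n : ℕ) (R : Fin m → Fin n → ℝ)
    (hbin : ∀ u i, R u i = 0 ∨ R u i = 1)
    (du : Fin m → ℝ) (hdu : ∀ u, du u = ∑ i, R u i)
    (di : Fin n → ℝ) (hdi : ∀ i, di i = ∑ u, R u i)
    (hdu_pos : ∀ u, 0 < du u)
    (hdi_pos : ∀ i, (∃ u, R u i = 1) → 0 < di i)
    (p p' : Fin m → Fin n → ℝ)
    (hp : ∀ u i, p u i = R u i / du u)
    (hp' : ∀ u i, p' u i =
      R u i / (Real.sqrt (di i) * ∑ j, R u j / Real.sqrt (di j))) :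
    ∑ u, ∑ i, Real.negMulLog (p' u i) ≤ ∑ u, ∑ i, Real.negMulLog (p u i) := by
  apply Finset.sum_le_sum
  intro u _
  set S : Finset (Fin n) := Finset.univ.filter (fun i => R u i = 1) with hS
  have hmem : ∀ i, i ∈ S ↔ R u i = 1 := by
    intro i; simp [hS]
  have hd : 0 < du u := hdu_pos u
  -- du u = card S
  have hcard : du u = (S.card : ℝ) := by
    rw [hdu]
    rw [Finset.card_filter, Nat.cast_sum]
    apply Finset.sum_congr rfl
    intro i _
    rcases hbin u i with h | h <;> simp [h]
  set W : ℝ := ∑ j, R u j / Real.sqrt (di j) with hW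
  -- W > 0
  have hWpos : 0 < W := by
    obtain ⟨i0, hi0⟩ : ∃ i, R u i = 1 := by
      by_contra h
      push_neg at h
      have hz : ∀ i, R u i = 0 := fun i => (hbin u i).resolve_right (h i)
      have hpos := hdu_pos u
      rw [hdu, Finset.sum_eq_zero (fun i _ => hz i)] at hpos
      exact lt_irrefl 0 hpos
    apply Finset.sum_pos'
    · intro j _
      rcases hbin u j with h | h
      · simp [h]
      · have : 0 ≤ Real.sqrt (di j) := Real.sqrt_nonneg _
        positivity
    · refine ⟨i0, Finset.mem_univ _, ?_⟩
      have hdi0 : 0 < di i0 := hdi_pos i0 ⟨u, hi0⟩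
      rw [hi0]
      positivity
  -- p' vanishes off S, positive on S
  have hq_off : ∀ i, i ∉ S → p' u i = 0 := by
    intro i hi
    have : R u i = 0 := (hbin u i).resolve_right (fun h => hi ((hmem i).mpr h))
    rw [hp', this, zero_div]
  have hq_pos : ∀ i, i ∈ S → 0 < p' u i := by
    intro i hi
    have hRi : R u i = 1 := (hmem i).mp hi
    have hdii : 0 < di i := hdi_pos i ⟨u, hRi⟩
    rw [hp', hRi]
    have : 0 < Real.sqrt (di i) := Real.sqrt_pos.mpr hdii
    positivity
  -- ∑ p' = 1
  have hsum1 : ∑ i, p' u i = 1 := by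
    have : ∀ i, p' u i = (R u i / Real.sqrt (di i)) / W := by
      intro i
      rw [hp', ← hW, div_div, mul_comm]
    simp_rw [this, ← Finset.sum_div, ← hW]
    exact div_self hWpos.ne'
  have hsumS : ∑ i ∈ S, p' u i = 1 := by
    rw [← hsum1]
    exact Finset.sum_subset (Finset.subset_univ S) (fun i _ hi => hq_off i hi)
  -- p vanishes off S, equals 1/du on S
  have hp_off : ∀ i, i ∉ S → p u i = 0 := by
    intro i hi
    have : R u i = 0 := (hbin u i).resolve_right (fun h => hi ((hmem i).mpr h))
    rw [hp, this, zero_div]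
  -- reduce both sums to S
  have hL : ∑ i, Real.negMulLog (p' u i) = ∑ i ∈ S, Real.negMulLog (p' u i) := by
    symm
    exact Finset.sum_subset (Finset.subset_univ S)
      (fun i _ hi => by rw [hq_off i hi, Real.negMulLog_zero])
  have hR : ∑ i, Real.negMulLog (p u i) = ∑ i ∈ S, Real.negMulLog (p u i) := by
    symm
    exact Finset.sum_subset (Finset.subset_univ S)
      (fun i _ hi => by rw [hp_off i hi, Real.negMulLog_zero])
  rw [hL, hR]
  -- RHS equals log (du u)
  have hRHS : ∑ i ∈ S, Real.negMulLog (p u i) = Real.log (du u) := by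
    have : ∀ i ∈ S, Real.negMulLog (p u i) = (1 / du u) * Real.log (du u) := by
      intro i hi
      rw [hp, (hmem i).mp hi, Real.negMulLog]
      rw [Real.log_div one_ne_zero hd.ne', Real.log_one]
      ring
    rw [Finset.sum_congr rfl this, Finset.sum_const, nsmul_eq_mul]
    rw [← hcard]
    field_simp
  rw [hRHS]
  -- LHS bound via Gibbs
  calc ∑ i ∈ S, Real.negMulLog (p' u i)
      ≤ ∑ i ∈ S, (p' u i * Real.log (du u) + (1 / du u - p' u i)) := by
        apply Finset.sum_le_sum
        intro i hi
        exact negMulLog_le_aux (hq_pos i hi) hd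
    _ = Real.log (du u) := by
        rw [Finset.sum_add_distrib, ← Finset.sum_mul, hsumS, one_mul,
          Finset.sum_sub_distrib, Finset.sum_const, hsumS, nsmul_eq_mul]
        rw [← hcard]
        field_simp
        ring
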